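/- arXiv:1804.04553 — 3 statements merged into one kernel-verified Lean document; each statement's English description precedes it below -/
import Mathlib

section
/- If ρ_R(ζ) = Σ_{j=0}^{k-1} γ_j ζ^j is a polynomial with γ_{k-1} ≠ 0 all of whose roots have modulus at most q < 1, then there is a constant C_0, independent of N, such that for every N ≥ 1 the N×N banded lower triangular Toeplitz matrix R_N with diagonal γ_{k-1} and j-th subdiagonal γ_{k-1-j} (for 1 ≤ j ≤ k−1) satisfies ‖R_N^{-1}‖_∞ ≤ C_0. -/
/-!
`R_N` is the leading `N × N` section of the lower triangular Toeplitz matrix of the reversed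
polynomial `ζ^(k-1) ρ_R(1/ζ) = γ_{k-1} ∏ᵢ (1 - zᵢ ζ)`, where the `zᵢ` are the roots of `ρ_R`.
Sections of lower triangular Toeplitz matrices multiply like the underlying power series, so
`R_N⁻¹` is the section of the power series `γ_{k-1}⁻¹ ∏ᵢ ∑ₙ zᵢⁿ ζⁿ`. The `∞`-norm of a section is
bounded by the partial `ℓ¹` sums of the coefficients, and these are submultiplicative; each
geometric factor contributes at most `(1 - q)⁻¹`, so `‖R_N⁻¹‖_∞ ≤ |γ_{k-1}|⁻¹ (1 - q)^(1-k)`.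
-/

open Matrix Finset Polynomial

noncomputable def infNorm {N : ℕ} (A : Matrix (Fin N) (Fin N) ℝ) : ℝ :=
  ⨆ i, ∑ j, |A i j|

/-- The banded lower triangular Toeplitz matrix with diagonal γ (k-1) and
j-th subdiagonal γ (k-1-j) for 1 ≤ j ≤ k-1. -/
noncomputable def RNmat (k : ℕ) (γ : ℕ → ℝ) (N : ℕ) : Matrix (Fin N) (Fin N) ℝ :=
  fun i j =>
    if (j : ℕ) ≤ (i : ℕ) ∧ (i : ℕ) - (j : ℕ) ≤ k - 1 then
      γ (k - 1 - ((i : ℕ) - (j : ℕ))) else 0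

open scoped PowerSeries

section LowerToeplitz

variable {R : Type*}

noncomputable def lowerToeplitz [Semiring R] (f : R⟦X⟧) (N : ℕ) : Matrix (Fin N) (Fin N) R :=
  Matrix.of fun i j => if (j : ℕ) ≤ i then PowerSeries.coeff ((i : ℕ) - j) f else 0

theorem lowerToeplitz_mul [Semiring R] (f g : R⟦X⟧) (N : ℕ) :
    lowerToeplitz f N * lowerToeplitz g N = lowerToeplitz (f * g) N := by
  ext i j
  simp only [lowerToeplitz, Matrix.mul_apply, Matrix.of_apply, PowerSeries.coeff_mul]
  rw [Fin.sum_univ_eq_sum_range (fun l =>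
    (if l ≤ (i : ℕ) then PowerSeries.coeff (i - l) f else 0) *
      (if (j : ℕ) ≤ l then PowerSeries.coeff (l - j) g else 0))]
  split_ifs with hji
  · symm
    refine sum_of_injOn (fun p => j + p.2) ?_ ?_ ?_ ?_
    · intro p hp p' hp' h
      simp only [mem_coe, HasAntidiagonal.mem_antidiagonal] at hp hp' h
      ext <;> omega
    · intro p hp
      simp only [mem_coe, HasAntidiagonal.mem_antidiagonal, coe_range, Set.mem_Iio] at hp ⊢
      omega
    · intro l _ hl
      split_ifs with hli hjl
      · refine absurd ⟨((i : ℕ) - l, l - j), ?_, by simp only; omega⟩ hl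
        simp only [mem_coe, HasAntidiagonal.mem_antidiagonal]
        omega
      all_goals simp
    · intro p hp
      rw [HasAntidiagonal.mem_antidiagonal] at hp
      rw [if_pos (by omega), if_pos (by omega), show (i : ℕ) - (j + p.2) = p.1 by omega,
        Nat.add_sub_cancel_left]
  · refine sum_eq_zero fun l _ => ?_
    split_ifs <;> first | omega | simp

theorem lowerToeplitz_one [Semiring R] (N : ℕ) : lowerToeplitz (1 : R⟦X⟧) N = 1 := by
  ext i j
  simp only [lowerToeplitz, Matrix.of_apply, PowerSeries.coeff_one, Matrix.one_apply, Fin.ext_iff]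
  split_ifs <;> first | rfl | omega

theorem infNorm_lowerToeplitz_le (f : ℝ⟦X⟧) (N : ℕ) {C : ℝ}
    (hC : ∀ n, ∑ m ∈ range n, |PowerSeries.coeff m f| ≤ C) :
    infNorm (lowerToeplitz f N) ≤ C := by
  refine Real.iSup_le (fun i => le_of_eq_of_le ?_ (hC (i + 1))) (by simpa using hC 0)
  simp only [lowerToeplitz, Matrix.of_apply]
  rw [Fin.sum_univ_eq_sum_range (fun l =>
    |if l ≤ (i : ℕ) then PowerSeries.coeff (i - l) f else 0|)]
  symm
  refine sum_of_injOn (fun m => i - m) ?_ ?_ ?_ ?_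
  · intro m hm m' hm' h
    simp only [mem_coe, mem_range] at hm hm' h
    omega
  · intro m hm
    simp only [mem_coe, mem_range] at hm ⊢
    omega
  · intro l _ hl
    split_ifs with hli
    · exact absurd ⟨(i : ℕ) - l, by simp only [mem_coe, mem_range]; omega, by simp only; omega⟩ hl
    · simp
  · intro m hm
    rw [mem_range] at hm
    rw [if_pos (by omega), Nat.sub_sub_self (by omega)]

end LowerToeplitz

namespace PowerSeries

theorem sum_range_norm_coeff_mul_le {R : Type*} [NormedRing R] (f g : R⟦X⟧) (N : ℕ) :
    ∑ n ∈ range N, ‖coeff n (f * g)‖ ≤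
      (∑ n ∈ range N, ‖coeff n f‖) * ∑ n ∈ range N, ‖coeff n g‖ := by
  calc ∑ n ∈ range N, ‖coeff n (f * g)‖
      ≤ ∑ n ∈ range N, ∑ a ∈ range (n + 1), ‖coeff a f‖ * ‖coeff (n - a) g‖ := by
        refine sum_le_sum fun n _ => ?_
        rw [coeff_mul, Nat.sum_antidiagonal_eq_sum_range_succ (fun a b => coeff a f * coeff b g)]
        exact (norm_sum_le _ _).trans (sum_le_sum fun a _ => norm_mul_le _ _)
    _ = ∑ a ∈ range N, ∑ b ∈ range (N - a), ‖coeff a f‖ * ‖coeff b g‖ :=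
        sum_range_diag_flip N fun a b => ‖coeff a f‖ * ‖coeff b g‖
    _ ≤ ∑ a ∈ range N, ∑ b ∈ range N, ‖coeff a f‖ * ‖coeff b g‖ :=
        sum_le_sum fun a _ => sum_le_sum_of_subset_of_nonneg
          (range_subset_range.mpr (Nat.sub_le _ _)) fun _ _ _ => by positivity
    _ = _ := (sum_mul_sum _ _ _ _).symm

theorem sum_range_norm_coeff_multiset_prod_le {R : Type*} [NormedCommRing R] [NormOneClass R]
    (s : Multiset R⟦X⟧) (N : ℕ) :
    ∑ n ∈ range N, ‖coeff n s.prod‖ ≤ (s.map fun f => ∑ n ∈ range N, ‖coeff n f‖).prod := by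
  induction s using Multiset.induction with
  | empty =>
    simp only [Multiset.prod_zero, Multiset.map_zero, coeff_one, apply_ite, norm_one, norm_zero,
      sum_ite_eq', mem_range]
    split_ifs <;> norm_num
  | cons f s ih =>
    rw [Multiset.prod_cons, Multiset.map_cons, Multiset.prod_cons]
    exact (sum_range_norm_coeff_mul_le f s.prod N).trans
      (mul_le_mul_of_nonneg_left ih (sum_nonneg fun _ _ => norm_nonneg _))

theorem sum_range_norm_coeff_rescale_mk_one_le {R : Type*} [NormedCommRing R] [NormOneClass R]
    {z : R} {q : ℝ} (hz : ‖z‖ ≤ q) (hq : q < 1) (N : ℕ) :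
    ∑ n ∈ range N, ‖coeff n (rescale z (mk 1))‖ ≤ (1 - q)⁻¹ := by
  have hz1 : ‖z‖ < 1 := hz.trans_lt hq
  calc ∑ n ∈ range N, ‖coeff n (rescale z (mk 1))‖
      ≤ ∑ n ∈ range N, ‖z‖ ^ n := sum_le_sum fun n _ => by
        simpa [coeff_rescale] using norm_pow_le z n
    _ ≤ (1 - ‖z‖)⁻¹ := by
        simpa using geom_sum_Ico_le_of_lt_one (norm_nonneg z) hz1 (m := 0) (n := N)
    _ ≤ (1 - q)⁻¹ := by gcongr

theorem map_inv {k k' : Type*} [Field k] [Field k'] (f : k →+* k') (φ : k⟦X⟧) :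
    map f φ⁻¹ = (map f φ)⁻¹ := by
  have hc : constantCoeff (map f φ) = f (constantCoeff φ) := by
    simp only [← coeff_zero_eq_constantCoeff_apply, coeff_map]
  rcases eq_or_ne (constantCoeff φ) 0 with h | h
  · rw [inv_eq_zero.mpr h, map_zero, eq_comm, inv_eq_zero, hc, h, map_zero]
  · rw [eq_inv_iff_mul_eq_one (by simpa [hc] using h), ← map_mul,
      PowerSeries.inv_mul_cancel _ h, map_one]

end PowerSeries

namespace Polynomial

theorem reverse_one {R : Type*} [Semiring R] : (1 : R[X]).reverse = 1 := by
  simpa using reverse_C (1 : R)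

theorem reverse_multiset_prod {R : Type*} [CommSemiring R] [NoZeroDivisors R]
    (s : Multiset R[X]) : s.prod.reverse = (s.map reverse).prod := by
  induction s using Multiset.induction with
  | empty => simp [reverse_one]
  | cons p s ih =>
    rw [Multiset.prod_cons, reverse_mul_of_domain, ih, Multiset.map_cons, Multiset.prod_cons]

theorem reverse_X_sub_C {R : Type*} [CommRing R] [Nontrivial R] (z : R) :
    (X - C z).reverse = 1 - C z * X := by
  have hX : (X : R[X]).reverse = 1 := by rw [← one_mul X, reverse_mul_X, reverse_one]
  rw [sub_eq_add_neg, ← C_neg, reverse_add_C, hX, natDegree_X, pow_one, C_neg, neg_mul,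
    ← sub_eq_add_neg]

theorem coeff_sum_range_C_mul_X_pow {R : Type*} [Semiring R] (γ : ℕ → R) (k m : ℕ) :
    (∑ j ∈ range k, C (γ j) * X ^ j).coeff m = if m < k then γ m else 0 := by
  simp

theorem natDegree_sum_range_C_mul_X_pow {R : Type*} [Semiring R] {γ : ℕ → R} {k : ℕ}
    (hk : 1 ≤ k) (hγ : γ (k - 1) ≠ 0) : (∑ j ∈ range k, C (γ j) * X ^ j).natDegree = k - 1 :=
  natDegree_eq_of_le_of_coeff_ne_zero
    (natDegree_le_iff_coeff_eq_zero.mpr fun m hm => by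
      rw [coeff_sum_range_C_mul_X_pow, if_neg (by omega)])
    (by rwa [coeff_sum_range_C_mul_X_pow, if_pos (by omega)])

theorem leadingCoeff_sum_range_C_mul_X_pow {R : Type*} [Semiring R] {γ : ℕ → R} {k : ℕ}
    (hk : 1 ≤ k) (hγ : γ (k - 1) ≠ 0) :
    (∑ j ∈ range k, C (γ j) * X ^ j).leadingCoeff = γ (k - 1) := by
  rw [leadingCoeff, natDegree_sum_range_C_mul_X_pow hk hγ, coeff_sum_range_C_mul_X_pow,
    if_pos (by omega)]

theorem reverse_map {K L : Type*} [Field K] [Field L] (f : K →+* L) (p : K[X]) :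
    (p.map f).reverse = p.reverse.map f := by
  ext n
  simp only [coeff_reverse, coeff_map, natDegree_map]

variable {K : Type*} [Field K]

theorem Splits.reverse_eq_C_mul_prod {p : K[X]} (hp : p.Splits) :
    p.reverse = C p.leadingCoeff * (p.roots.map fun z => 1 - C z * X).prod := by
  conv_lhs => rw [← C_leadingCoeff_mul_prod_multiset_X_sub_C hp.natDegree_eq_card_roots.symm]
  rw [reverse_mul_of_domain, reverse_C, reverse_multiset_prod, Multiset.map_map]
  simp only [Function.comp_def, reverse_X_sub_C]

theorem Splits.inv_coe_reverse {p : K[X]} (hp : p.Splits) (hp0 : p ≠ 0) :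
    (p.reverse : K⟦X⟧)⁻¹ =
      PowerSeries.C p.leadingCoeff⁻¹ *
        (p.roots.map fun z => PowerSeries.rescale z (PowerSeries.mk 1)).prod := by
  refine ((PowerSeries.eq_inv_iff_mul_eq_one ?_).mpr ?_).symm
  · rw [← PowerSeries.coeff_zero_eq_constantCoeff_apply, coeff_coe, coeff_zero_reverse]
    exact leadingCoeff_ne_zero.mpr hp0
  have hgeom (z : K) : PowerSeries.rescale z (PowerSeries.mk 1) *
      ((1 - C z * X : K[X]) : K⟦X⟧) = 1 := by
    simpa [PowerSeries.rescale_X] using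
      congrArg (PowerSeries.rescale z) (PowerSeries.mk_one_mul_one_sub_eq_one (S := K))
  rw [hp.reverse_eq_C_mul_prod, ← coeToPowerSeries.ringHom_apply, map_mul, map_multiset_prod,
    Multiset.map_map, coeToPowerSeries.ringHom_apply, coe_C, mul_mul_mul_comm,
    ← map_mul, inv_mul_cancel₀ (leadingCoeff_ne_zero.mpr hp0), map_one, one_mul,
    ← Multiset.prod_map_mul]
  exact Multiset.prod_eq_one fun f hf => by
    obtain ⟨z, -, rfl⟩ := Multiset.mem_map.mp hf
    exact hgeom z

theorem sum_range_norm_coeff_inv_reverse_le {K : Type*} [NormedField K] [IsAlgClosed K]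
    {p : K[X]} (hp0 : p ≠ 0) {q : ℝ} (hq : q < 1) (hroots : ∀ z ∈ p.roots, ‖z‖ ≤ q) (N : ℕ) :
    ∑ n ∈ range N, ‖PowerSeries.coeff n (p.reverse : K⟦X⟧)⁻¹‖ ≤
      ‖p.leadingCoeff‖⁻¹ * ((1 - q)⁻¹) ^ p.natDegree := by
  have hsplit := IsAlgClosed.splits p
  simp only [hsplit.inv_coe_reverse hp0, PowerSeries.coeff_C_mul, norm_mul, norm_inv,
    ← mul_sum]
  gcongr
  refine (PowerSeries.sum_range_norm_coeff_multiset_prod_le _ N).trans ?_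
  rw [Multiset.map_map, hsplit.natDegree_eq_card_roots]
  calc _ ≤ (p.roots.map fun _ => (1 - q)⁻¹).prod :=
        Multiset.prod_map_le_prod_map₀ _ _ (fun _ _ => sum_nonneg fun _ _ => norm_nonneg _)
          fun z hz => PowerSeries.sum_range_norm_coeff_rescale_mk_one_le (hroots z hz) hq N
    _ = _ := by rw [Multiset.map_const', Multiset.prod_replicate]

theorem sum_range_abs_coeff_inv_reverse_le {p : ℝ[X]} (hp0 : p ≠ 0) {q : ℝ} (hq : q < 1)
    (hroots : ∀ z : ℂ, (p.map (algebraMap ℝ ℂ)).IsRoot z → ‖z‖ ≤ q) (N : ℕ) :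
    ∑ n ∈ range N, |PowerSeries.coeff n (p.reverse : ℝ⟦X⟧)⁻¹| ≤
      |p.leadingCoeff|⁻¹ * ((1 - q)⁻¹) ^ p.natDegree := by
  have hmap : PowerSeries.map (algebraMap ℝ ℂ) (p.reverse : ℝ⟦X⟧)⁻¹ =
      ((p.map (algebraMap ℝ ℂ)).reverse : ℂ⟦X⟧)⁻¹ := by
    rw [PowerSeries.map_inv, ← polynomial_map_coe, reverse_map]
  have hbound := sum_range_norm_coeff_inv_reverse_le
    ((Polynomial.map_ne_zero_iff (algebraMap ℝ ℂ).injective).mpr hp0) hq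
    (fun z hz => hroots z (isRoot_of_mem_roots hz)) N
  rw [← hmap, leadingCoeff_map, natDegree_map] at hbound
  simpa [PowerSeries.coeff_map] using hbound

end Polynomial

theorem RNmat_eq_lowerToeplitz_reverse {k : ℕ} (hk : 1 ≤ k) {γ : ℕ → ℝ} (hγ : γ (k - 1) ≠ 0)
    (N : ℕ) : RNmat k γ N = lowerToeplitz ((∑ j ∈ range k, C (γ j) * X ^ j).reverse : ℝ⟦X⟧) N := by
  ext i j
  simp only [RNmat, lowerToeplitz, Matrix.of_apply, coeff_coe, coeff_reverse,
    natDegree_sum_range_C_mul_X_pow hk hγ, revAt, Function.Embedding.coeFn_mk,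
    coeff_sum_range_C_mul_X_pow]
  split_ifs <;> first | rfl | omega

theorem stmt4_general (k : ℕ) (hk : 1 ≤ k) (γ : ℕ → ℝ) (hγ : γ (k - 1) ≠ 0)
    (q : ℝ) (hq1 : q < 1)
    (hroots : ∀ z : ℂ,
      ((∑ j ∈ Finset.range k, Polynomial.C (γ j) * Polynomial.X ^ j).map
        (algebraMap ℝ ℂ)).eval z = 0 → ‖z‖ ≤ q) :
    ∃ C0 : ℝ, ∀ N : ℕ, 1 ≤ N →
      ∃ B : Matrix (Fin N) (Fin N) ℝ,
        RNmat k γ N * B = 1 ∧ B * RNmat k γ N = 1 ∧ infNorm B ≤ C0 := by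
  set P : ℝ[X] := ∑ j ∈ range k, C (γ j) * X ^ j
  have hlead : P.leadingCoeff = γ (k - 1) := leadingCoeff_sum_range_C_mul_X_pow hk hγ
  have hdeg : P.natDegree = k - 1 := natDegree_sum_range_C_mul_X_pow hk hγ
  have hP0 : P ≠ 0 := leadingCoeff_ne_zero.mp (hlead ▸ hγ)
  have hunit : (P.reverse : ℝ⟦X⟧) * (P.reverse : ℝ⟦X⟧)⁻¹ = 1 :=
    PowerSeries.mul_inv_cancel _ (by simpa [coeff_zero_reverse] using hP0)
  refine ⟨|γ (k - 1)|⁻¹ * ((1 - q)⁻¹) ^ (k - 1), fun N _ =>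
    ⟨lowerToeplitz (P.reverse : ℝ⟦X⟧)⁻¹ N, ?_, ?_, ?_⟩⟩
  · rw [RNmat_eq_lowerToeplitz_reverse hk hγ, lowerToeplitz_mul, hunit, lowerToeplitz_one]
  · rw [RNmat_eq_lowerToeplitz_reverse hk hγ, lowerToeplitz_mul, mul_comm, hunit,
      lowerToeplitz_one]
  · refine infNorm_lowerToeplitz_le _ N fun n => ?_
    simpa only [hlead, hdeg] using sum_range_abs_coeff_inv_reverse_le hP0 hq1 hroots n

theorem stmt4 (k : ℕ) (hk : 1 ≤ k) (γ : ℕ → ℝ) (hγ : γ (k - 1) ≠ 0)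
    (q : ℝ) (hq0 : 0 ≤ q) (hq1 : q < 1)
    (hroots : ∀ z : ℂ,
      ((∑ j ∈ Finset.range k, Polynomial.C (γ j) * Polynomial.X ^ j).map
        (algebraMap ℝ ℂ)).eval z = 0 → ‖z‖ ≤ q) :
    ∃ C0 : ℝ, ∀ N : ℕ, 1 ≤ N →
      ∃ B : Matrix (Fin N) (Fin N) ℝ,
        RNmat k γ N * B = 1 ∧ B * RNmat k γ N = 1 ∧ infNorm B ≤ C0 :=
  stmt4_general k hk γ hγ q hq1 hroots
end

section
/- For an N×N matrix A that is strictly diagonally dominant in the sense that its lower logarithmic max norm m_∞[A] = min_i (Re a_{ii} − Σ_{j≠i} |a_{ij}|) is positive, A is invertible and ‖A^{-1}‖_∞ ≤ 1/m_∞[A]. -/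
open Matrix Finset

/-- Lower logarithmic max norm: min over rows of (diagonal − off-diagonal absolute sum). -/
noncomputable def logNormLower {N : ℕ} (A : Matrix (Fin N) (Fin N) ℝ) : ℝ :=
  ⨅ i, (A i i - ∑ j ∈ Finset.univ.erase i, |A i j|)

/-!
If `|y_k|` is the largest entry of `y`, the `k`-th row of `A` gives
`|(A y)_k| ≥ (a_kk - ∑_{j≠k} |a_kj|) |y_k| ≥ m |y_k|`, so `‖A y‖_∞ ≥ m ‖y‖_∞` with `m = m_∞[A]`.
For `m > 0` this makes `A` injective, hence invertible, and testing `A⁻¹` against the sign vector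
of its `i`-th row (a vector of max norm at most `1`) bounds that row's absolute sum by `1 / m`.
-/

lemma diag_sub_offDiag_mul_abs_le_abs_mulVec {n : Type*} [Fintype n] [DecidableEq n]
    (A : Matrix n n ℝ) {y : n → ℝ} {k : n} (hk : ∀ j, |y j| ≤ |y k|) :
    (A k k - ∑ j ∈ univ.erase k, |A k j|) * |y k| ≤ |(A *ᵥ y) k| := by
  set r := ∑ j ∈ univ.erase k, A k j * y j
  have hsplit : (A *ᵥ y) k = A k k * y k + r :=
    (add_sum_erase univ (fun j => A k j * y j) (mem_univ k)).symm
  have hr : |r| ≤ (∑ j ∈ univ.erase k, |A k j|) * |y k| := by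
    calc |r| ≤ ∑ j ∈ univ.erase k, |A k j| * |y j| := by
          simpa only [abs_mul] using abs_sum_le_sum_abs (fun j => A k j * y j) (univ.erase k)
      _ ≤ ∑ j ∈ univ.erase k, |A k j| * |y k| :=
          sum_le_sum fun j _ => mul_le_mul_of_nonneg_left (hk j) (abs_nonneg _)
      _ = _ := (sum_mul ..).symm
  have hdiag : A k k * |y k| ≤ |A k k * y k| := by
    rw [abs_mul]; exact mul_le_mul_of_nonneg_right (le_abs_self _) (abs_nonneg _)
  calc (A k k - ∑ j ∈ univ.erase k, |A k j|) * |y k| ≤ |A k k * y k| - |r| := by linarith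
    _ ≤ |(A *ᵥ y) k| := hsplit ▸ abs_sub_abs_le_abs_add _ _

lemma logNormLower_le {N : ℕ} (A : Matrix (Fin N) (Fin N) ℝ) (k : Fin N) :
    logNormLower A ≤ A k k - ∑ j ∈ univ.erase k, |A k j| :=
  ciInf_le (Finite.bddBelow_range _) k

lemma abs_le_div_logNormLower {N : ℕ} {A : Matrix (Fin N) (Fin N) ℝ} (hm : 0 < logNormLower A)
    {y : Fin N → ℝ} {c : ℝ} (hc : ∀ k, |(A *ᵥ y) k| ≤ c) (i : Fin N) :
    |y i| ≤ c / logNormLower A := by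
  have : Nonempty (Fin N) := ⟨i⟩
  obtain ⟨k, hk⟩ := Finite.exists_max fun j => |y j|
  rw [le_div_iff₀' hm]
  calc logNormLower A * |y i| ≤ logNormLower A * |y k| := mul_le_mul_of_nonneg_left (hk i) hm.le
    _ ≤ (A k k - ∑ j ∈ univ.erase k, |A k j|) * |y k| := by gcongr; exact logNormLower_le A k
    _ ≤ |(A *ᵥ y) k| := diag_sub_offDiag_mul_abs_le_abs_mulVec A hk
    _ ≤ c := hc k

lemma isUnit_det_of_logNormLower_pos {N : ℕ} {A : Matrix (Fin N) (Fin N) ℝ}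
    (hm : 0 < logNormLower A) : IsUnit A.det := by
  refine isUnit_iff_ne_zero.mpr fun hdet => ?_
  obtain ⟨y, hy, hAy⟩ := exists_mulVec_eq_zero_iff.mpr hdet
  refine hy (funext fun i => abs_nonpos_iff.mp ?_)
  simpa using abs_le_div_logNormLower hm (c := 0) (by simp [hAy]) i

lemma sum_abs_eq_mulVec_sign {n : Type*} [Fintype n] (B : Matrix n n ℝ) (i : n) :
    ∑ j, |B i j| = (B *ᵥ fun j => (SignType.sign (B i j) : ℝ)) i := by
  simp only [mulVec, dotProduct, self_mul_sign]

lemma abs_sign_le_one {α : Type*} [Ring α] [LinearOrder α] [IsStrictOrderedRing α] (x : α) :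
    |(SignType.sign x : α)| ≤ 1 := by
  rcases SignType.sign x with _ | _ | _ <;> simp

lemma infNorm_inv_le {N : ℕ} {A : Matrix (Fin N) (Fin N) ℝ} (hm : 0 < logNormLower A) :
    infNorm A⁻¹ ≤ 1 / logNormLower A := by
  refine Real.iSup_le (fun i => ?_) (one_div_pos.mpr hm).le
  have hA : A * A⁻¹ = 1 := mul_nonsing_inv A (isUnit_det_of_logNormLower_pos hm)
  rw [sum_abs_eq_mulVec_sign]
  refine (le_abs_self _).trans (abs_le_div_logNormLower hm (fun k => ?_) i)
  rw [mulVec_mulVec, hA, one_mulVec]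
  exact abs_sign_le_one _

theorem stmt5_general (N : ℕ) (A : Matrix (Fin N) (Fin N) ℝ)
    (hdom : 0 < logNormLower A) :
    ∃ B : Matrix (Fin N) (Fin N) ℝ,
      A * B = 1 ∧ B * A = 1 ∧ infNorm B ≤ 1 / logNormLower A := by
  have hA := isUnit_det_of_logNormLower_pos hdom
  exact ⟨A⁻¹, mul_nonsing_inv A hA, nonsing_inv_mul A hA, infNorm_inv_le hdom⟩

theorem stmt5 (N : ℕ) (hN : 1 ≤ N) (A : Matrix (Fin N) (Fin N) ℝ)
    (hdom : 0 < logNormLower A) :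
    ∃ B : Matrix (Fin N) (Fin N) ℝ,
      A * B = 1 ∧ B * A = 1 ∧ infNorm B ≤ 1 / logNormLower A :=
  stmt5_general N A hdom
end

section
/- For a real number r, the inequality 1 + 2r − r² > 0 holds if and only if 1 − √2 < r < 1 + √2; hence the variable-step BDF2 extraneous matrix, lower bidiagonal with diagonal entries (1+2r_n)/2 and subdiagonal entries −r_n²/2, has positive lower logarithmic max norm whenever all step ratios satisfy 0 < r_n < 1 + √2. -/
open Matrix Finset

/-! Each row of a lower bidiagonal matrix has at most one off-diagonal entry, the subdiagonal
`-s i`, so the row quantity in `logNormLower` is at least `d i - |s i|`. For the BDF2 matrix this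
is `(1 + 2 r - r ^ 2) / 2`, which is positive for `0 < r < 1 + √2` because
`1 + 2 r - r ^ 2 = (1 + √2 - r) (r - (1 - √2))`. -/

theorem one_add_two_mul_sub_sq_pos_iff (r : ℝ) :
    0 < 1 + 2 * r - r ^ 2 ↔ 1 - Real.sqrt 2 < r ∧ r < 1 + Real.sqrt 2 := by
  have hsq : Real.sqrt 2 ^ 2 = 2 := Real.sq_sqrt zero_le_two
  have hfactor : 1 + 2 * r - r ^ 2 = (1 + Real.sqrt 2 - r) * (r - (1 - Real.sqrt 2)) := by
    linear_combination -hsq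
  rw [hfactor, mul_pos_iff]
  constructor
  · rintro (⟨h₁, h₂⟩ | ⟨h₁, h₂⟩)
    · constructor <;> linarith
    · exfalso; linarith [Real.sqrt_nonneg 2]
  · rintro ⟨h₁, h₂⟩
    left; constructor <;> linarith

theorem lt_logNormLower {N : ℕ} [NeZero N] (A : Matrix (Fin N) (Fin N) ℝ) {c : ℝ}
    (h : ∀ i, c < A i i - ∑ j ∈ univ.erase i, |A i j|) : c < logNormLower A := by
  obtain ⟨i₀, hi₀⟩ := Finite.exists_min fun i => A i i - ∑ j ∈ univ.erase i, |A i j|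
  exact (h i₀).trans_le (le_ciInf hi₀)

def lowerBidiagonal {N : ℕ} (d s : Fin N → ℝ) : Matrix (Fin N) (Fin N) ℝ :=
  fun i j => if i = j then d i else if (i : ℕ) = (j : ℕ) + 1 then -s i else 0

theorem sum_erase_abs_lowerBidiagonal_le {N : ℕ} (d s : Fin N → ℝ) (i : Fin N) :
    ∑ j ∈ univ.erase i, |lowerBidiagonal d s i j| ≤ |s i| := by
  let j₀ : Fin N := ⟨i - 1, by omega⟩
  have hentry : ∀ j ∈ univ.erase i,
      |lowerBidiagonal d s i j| ≤ if j = j₀ then |s i| else 0 := by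
    intro j hj
    have hji : i ≠ j := (mem_erase.1 hj).1.symm
    rw [lowerBidiagonal, if_neg hji]
    by_cases hsub : (i : ℕ) = (j : ℕ) + 1
    · have : j = j₀ := Fin.ext (by simp only [j₀]; omega)
      rw [if_pos hsub, if_pos this, abs_neg]
    · rw [if_neg hsub, abs_zero]
      split_ifs <;> positivity
  calc ∑ j ∈ univ.erase i, |lowerBidiagonal d s i j|
      ≤ ∑ j ∈ univ.erase i, if j = j₀ then |s i| else 0 := sum_le_sum hentry
    _ ≤ ∑ j, if j = j₀ then |s i| else 0 :=
        sum_le_sum_of_subset_of_nonneg (subset_univ _) fun _ _ _ => by positivity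
    _ = |s i| := by simp

theorem lt_logNormLower_lowerBidiagonal {N : ℕ} [NeZero N] (d s : Fin N → ℝ) {c : ℝ}
    (h : ∀ i, c < d i - |s i|) : c < logNormLower (lowerBidiagonal d s) :=
  lt_logNormLower _ fun i => by
    have hdiag : lowerBidiagonal d s i i = d i := if_pos rfl
    linarith [h i, sum_erase_abs_lowerBidiagonal_le d s i]

theorem stmt13 :
    (∀ r : ℝ, (0 < 1 + 2 * r - r ^ 2 ↔ 1 - Real.sqrt 2 < r ∧ r < 1 + Real.sqrt 2)) ∧
    ∀ (N : ℕ), 1 ≤ N → ∀ (r : Fin N → ℝ),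
      (∀ n, 0 < r n ∧ r n < 1 + Real.sqrt 2) →
      ∀ A : Matrix (Fin N) (Fin N) ℝ,
        (∀ i j : Fin N, A i j =
          if i = j then (1 + 2 * r i) / 2
          else if (i : ℕ) = (j : ℕ) + 1 then -((r i) ^ 2) / 2 else 0) →
        0 < logNormLower A := by
  refine ⟨one_add_two_mul_sub_sq_pos_iff, fun N hN r hr A hA => ?_⟩
  have : NeZero N := ⟨by omega⟩
  have hA' : A = lowerBidiagonal (fun i => (1 + 2 * r i) / 2) (fun i => r i ^ 2 / 2) := by
    ext i j
    rw [hA, lowerBidiagonal, neg_div]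
  rw [hA']
  refine lt_logNormLower_lowerBidiagonal _ _ fun i => ?_
  obtain ⟨hr₀, hr₁⟩ := hr i
  have hroot : 1 - Real.sqrt 2 < r i := by linarith [Real.one_lt_sqrt_two]
  have hpos := (one_add_two_mul_sub_sq_pos_iff (r i)).2 ⟨hroot, hr₁⟩
  rw [abs_of_nonneg (by positivity)]
  linarith
end
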